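/- (Equation (22): the gradient difference is bounded by the task similarity.) Let D⁰ = {x⁰₊ₖ, x⁰₋ₖ}ₖ₌₁^K and D¹ = {x¹₊ₖ, x¹₋ₖ}ₖ₌₁^K be two K-shot task datasets and suppose η₀ = η₁. Then ‖∇_{η₀}(L_{D⁰} − L_{D¹})‖₂ ≤ L · ‖D_ω‖₂ · Sim(D⁰, D¹), where ‖D_ω‖₂ is the ℓ²→ℓ² operator norm of the matrix D_ω. In particular, the Euclidean norm of the difference of the η₀-gradients of the two task losses is bounded above by a constant multiple of the task similarity Sim(D⁰, D¹). -/

import Mathlib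

open scoped InnerProductSpace

/-- Binary softmax, first component. -/
noncomputable def p0 (u0 u1 : ℝ) : ℝ := Real.exp u0 / (Real.exp u0 + Real.exp u1)

/-- Binary softmax, second component. -/
noncomputable def p1 (u0 u1 : ℝ) : ℝ := Real.exp u1 / (Real.exp u0 + Real.exp u1)

/-- Cross-entropy loss ℓ(u; y) = −y₀ log p₀(u) − y₁ log p₁(u), with label (y0, y1)
and logits (u0, u1). -/
noncomputable def xent (y0 y1 u0 u1 : ℝ) : ℝ :=
  -(y0 * Real.log (p0 u0 u1)) - y1 * Real.log (p1 u0 u1)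

/-- The valid index l + a ∈ Fin L, for l ∈ Fin (L−M+1) and a ∈ Fin M with M ≤ L. -/
def idx {L M : ℕ} (hL : M ≤ L) (l : Fin (L - M + 1)) (a : Fin M) : Fin L :=
  ⟨l.val + a.val, by have h1 := l.isLt; have h2 := a.isLt; omega⟩

/-- Row-major flattening of an L×L image, indexed by pairs. -/
def flat {L : ℕ} (x : Fin L → Fin L → ℝ) : EuclideanSpace ℝ (Fin L × Fin L) :=
  WithLp.toLp 2 (fun m => x m.1 m.2)

/-- The sparse Toeplitz matrix D_ω representing the valid convolution with filter ω. -/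
noncomputable def Dmat {L M : ℕ} (hM : 1 ≤ M) (hL : M ≤ L) (ω : Fin M × Fin M → ℝ) :
    Matrix (Fin (L - M + 1) × Fin (L - M + 1)) (Fin L × Fin L) ℝ :=
  fun l m =>
    if h : l.1.val ≤ m.1.val ∧ m.1.val - l.1.val ≤ M - 1 ∧
        l.2.val ≤ m.2.val ∧ m.2.val - l.2.val ≤ M - 1 then
      ω (⟨m.1.val - l.1.val, by omega⟩, ⟨m.2.val - l.2.val, by omega⟩)
    else 0

/-- The flattened feature map z̄(x) = D_ω x̄. -/
noncomputable def zbar {L M : ℕ} (hM : 1 ≤ M) (hL : M ≤ L) (ω : Fin M × Fin M → ℝ)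
    (x : Fin L → Fin L → ℝ) : EuclideanSpace ℝ (Fin (L - M + 1) × Fin (L - M + 1)) :=
  WithLp.toLp 2 ((Dmat hM hL ω).mulVec (flat x))

/-- Task loss of a K-shot dataset with positive samples xp (label (1,0)) and negative
samples xm (label (0,1)): L_D = (1/K) Σₖ ( ℓ(xpₖ; (1,0)) + ℓ(xmₖ; (0,1)) ), where the
logits of a sample x are (η₀·z̄(x), η₁·z̄(x)). -/
noncomputable def taskLoss {L M K : ℕ} (hM : 1 ≤ M) (hL : M ≤ L) (ω : Fin M × Fin M → ℝ)
    (xp xm : Fin K → Fin L → Fin L → ℝ)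
    (η0 η1 : EuclideanSpace ℝ (Fin (L - M + 1) × Fin (L - M + 1))) : ℝ :=
  (1 / (K : ℝ)) * ∑ k : Fin K,
    (xent 1 0 ⟪η0, zbar hM hL ω (xp k)⟫_ℝ ⟪η1, zbar hM hL ω (xp k)⟫_ℝ +
     xent 0 1 ⟪η0, zbar hM hL ω (xm k)⟫_ℝ ⟪η1, zbar hM hL ω (xm k)⟫_ℝ)

/-- The task similarity Sim(D⁰, D¹) = (1/(2K√N)) (‖Σₖ (x̄⁰₊ₖ − x̄¹₊ₖ)‖₂ + ‖Σₖ (x̄⁰₋ₖ − x̄¹₋ₖ)‖₂),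
where N = L² is the length of the flattened images. -/
noncomputable def Sim {L K : ℕ} (x0p x0m x1p x1m : Fin K → Fin L → Fin L → ℝ) : ℝ :=
  (1 / (2 * (K : ℝ) * Real.sqrt ((L : ℝ) ^ 2))) *
    (‖∑ k : Fin K, (flat (x0p k) - flat (x1p k))‖ +
     ‖∑ k : Fin K, (flat (x0m k) - flat (x1m k))‖)

/-! At `η₀ = η₁` the two logits of every sample coincide, so the softmax outputs `1/2` and the
`η₀`-gradient of `L_D` is `(1/(2K)) D_ω Σₖ (x̄₋ₖ - x̄₊ₖ)`, which is linear in the data. The gradient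
difference is therefore `(1/(2K)) D_ω (Σₖ (x̄⁰₋ₖ - x̄¹₋ₖ) - Σₖ (x̄⁰₊ₖ - x̄¹₊ₖ))`; the operator norm and
the triangle inequality bound it, and `√N = L` absorbs the factor `L`. -/

theorem p0_self (t : ℝ) : p0 t t = 1 / 2 := by
  have := Real.exp_pos t
  unfold p0
  field_simp
  ring

theorem xent_eq_log_sum_exp (y0 y1 u0 u1 : ℝ) :
    xent y0 y1 u0 u1 = (y0 + y1) * Real.log (Real.exp u0 + Real.exp u1) - y0 * u0 - y1 * u1 := by
  have hS : Real.exp u0 + Real.exp u1 ≠ 0 := by positivity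
  simp only [xent, p0, p1, Real.log_div (Real.exp_ne_zero _) hS, Real.log_exp]
  ring

theorem hasDerivAt_xent_fst (y0 y1 u0 u1 : ℝ) :
    HasDerivAt (fun s => xent y0 y1 s u1) ((y0 + y1) * p0 u0 u1 - y0) u0 := by
  have hS : HasDerivAt (fun s => Real.exp s + Real.exp u1) (Real.exp u0) u0 :=
    (Real.hasDerivAt_exp u0).add_const _
  have h := (((hS.log (by positivity)).const_mul (y0 + y1)).sub
    ((hasDerivAt_id u0).const_mul y0)).sub_const (y1 * u1)
  simp only [xent_eq_log_sum_exp]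
  exact h.congr_deriv (by rw [p0]; ring)

open InnerProductSpace

section Gradient

variable {F : Type*} [NormedAddCommGroup F] [InnerProductSpace ℝ F] [CompleteSpace F]
  {f g : F → ℝ} {f' g' x : F}

theorem HasGradientAt.add (hf : HasGradientAt f f' x) (hg : HasGradientAt g g' x) :
    HasGradientAt (fun y => f y + g y) (f' + g') x := by
  rw [hasGradientAt_iff_hasFDerivAt, map_add]
  exact hf.hasFDerivAt.add hg.hasFDerivAt

theorem HasGradientAt.sub (hf : HasGradientAt f f' x) (hg : HasGradientAt g g' x) :
    HasGradientAt (fun y => f y - g y) (f' - g') x := by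
  rw [hasGradientAt_iff_hasFDerivAt, map_sub]
  exact hf.hasFDerivAt.sub hg.hasFDerivAt

theorem HasGradientAt.const_mul (c : ℝ) (hf : HasGradientAt f f' x) :
    HasGradientAt (fun y => c * f y) (c • f') x := by
  rw [hasGradientAt_iff_hasFDerivAt, map_smulₛₗ, starRingEnd_apply, star_trivial]
  exact hf.hasFDerivAt.const_mul c

theorem HasGradientAt.sum {ι : Type*} (s : Finset ι) {f : ι → F → ℝ} {f' : ι → F}
    (h : ∀ i ∈ s, HasGradientAt (f i) (f' i) x) :
    HasGradientAt (fun y => ∑ i ∈ s, f i y) (∑ i ∈ s, f' i) x := by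
  rw [hasGradientAt_iff_hasFDerivAt, map_sum]
  exact HasFDerivAt.fun_sum fun i hi => (h i hi).hasFDerivAt

theorem HasDerivAt.hasGradientAt_comp_inner {φ : ℝ → ℝ} {φ' : ℝ} (z : F)
    (hφ : HasDerivAt φ φ' ⟪x, z⟫_ℝ) :
    HasGradientAt (fun y => φ ⟪y, z⟫_ℝ) (φ' • z) x := by
  rw [hasGradientAt_iff_hasFDerivAt, map_smulₛₗ, starRingEnd_apply, star_trivial]
  have hz : HasFDerivAt (fun y : F => ⟪y, z⟫_ℝ) (toDual ℝ F z) x := by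
    convert (toDual ℝ F z).hasFDerivAt using 1
    exact funext fun y => real_inner_comm z y
  exact hφ.comp_hasFDerivAt x hz

theorem hasGradientAt_xent_inner_self (y0 y1 : ℝ) (z η : F) :
    HasGradientAt (fun e => xent y0 y1 ⟪e, z⟫_ℝ ⟪η, z⟫_ℝ) (((y0 + y1) / 2 - y0) • z) η := by
  have h := (hasDerivAt_xent_fst y0 y1 ⟪η, z⟫_ℝ ⟪η, z⟫_ℝ).hasGradientAt_comp_inner z
  rwa [p0_self, mul_one_div] at h

end Gradient

section TaskLoss

variable {L M K : ℕ} (hM : 1 ≤ M) (hL : M ≤ L) (ω : Fin M × Fin M → ℝ)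

theorem zbar_eq_toEuclideanLin (x : Fin L → Fin L → ℝ) :
    zbar hM hL ω x = Matrix.toEuclideanLin (Dmat hM hL ω) (flat x) := rfl

theorem hasGradientAt_taskLoss_self (xp xm : Fin K → Fin L → Fin L → ℝ)
    (η : EuclideanSpace ℝ (Fin (L - M + 1) × Fin (L - M + 1))) :
    HasGradientAt (fun e => taskLoss hM hL ω xp xm e η)
      ((1 / (2 * (K : ℝ))) • Matrix.toEuclideanLin (Dmat hM hL ω)
        (∑ k, (flat (xm k) - flat (xp k)))) η := by
  have hsample : ∀ k ∈ Finset.univ, HasGradientAt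
      (fun e => xent 1 0 ⟪e, zbar hM hL ω (xp k)⟫_ℝ ⟪η, zbar hM hL ω (xp k)⟫_ℝ +
        xent 0 1 ⟪e, zbar hM hL ω (xm k)⟫_ℝ ⟪η, zbar hM hL ω (xm k)⟫_ℝ)
      ((1 / 2 : ℝ) • (zbar hM hL ω (xm k) - zbar hM hL ω (xp k))) η := by
    intro k _
    convert (hasGradientAt_xent_inner_self 1 0 _ η).add
      (hasGradientAt_xent_inner_self 0 1 _ η) using 1
    module
  have hgrad : (1 / (2 * (K : ℝ))) • Matrix.toEuclideanLin (Dmat hM hL ω)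
        (∑ k, (flat (xm k) - flat (xp k))) =
      (1 / (K : ℝ)) • ∑ k, (1 / 2 : ℝ) • (zbar hM hL ω (xm k) - zbar hM hL ω (xp k)) := by
    rw [← Finset.smul_sum, smul_smul, map_sum]
    simp only [map_sub, zbar_eq_toEuclideanLin]
    congr 1
    ring
  rw [hgrad]
  exact (HasGradientAt.sum _ hsample).const_mul _

end TaskLoss

theorem Sim_eq {L K : ℕ} (x0p x0m x1p x1m : Fin K → Fin L → Fin L → ℝ) :
    Sim x0p x0m x1p x1m = 1 / (2 * (K : ℝ) * L) *
      (‖∑ k, (flat (x0p k) - flat (x1p k))‖ + ‖∑ k, (flat (x0m k) - flat (x1m k))‖) := by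
  rw [Sim, Real.sqrt_sq (Nat.cast_nonneg L)]

/-- Equation (22): when η₀ = η₁, the norm of the difference of the η₀-gradients of the
two task losses is bounded by L · ‖D_ω‖₂ · Sim(D⁰, D¹), where ‖D_ω‖₂ is the ℓ²→ℓ²
operator norm of D_ω. -/
theorem grad_diff_le_sim (L M K : ℕ) (hM : 1 ≤ M) (hL : M ≤ L)
    (ω : Fin M × Fin M → ℝ)
    (x0p x0m x1p x1m : Fin K → Fin L → Fin L → ℝ)
    (η0 η1 : EuclideanSpace ℝ (Fin (L - M + 1) × Fin (L - M + 1)))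
    (h : η0 = η1) :
    ‖gradient (fun e : EuclideanSpace ℝ (Fin (L - M + 1) × Fin (L - M + 1)) =>
        taskLoss hM hL ω x0p x0m e η1 - taskLoss hM hL ω x1p x1m e η1) η0‖ ≤
      (L : ℝ) * ‖LinearMap.toContinuousLinearMap (Matrix.toEuclideanLin (Dmat hM hL ω))‖ *
        Sim x0p x0m x1p x1m := by
  subst h
  set A := LinearMap.toContinuousLinearMap (Matrix.toEuclideanLin (Dmat hM hL ω))
  set vp := ∑ k, (flat (x0p k) - flat (x1p k))
  set vm := ∑ k, (flat (x0m k) - flat (x1m k))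
  have hL0 : (L : ℝ) ≠ 0 := Nat.cast_ne_zero.mpr (by omega)
  have hgrad := (hasGradientAt_taskLoss_self hM hL ω x0p x0m η0).sub
    (hasGradientAt_taskLoss_self hM hL ω x1p x1m η0)
  have hdata : ∑ k, (flat (x0m k) - flat (x0p k)) - ∑ k, (flat (x1m k) - flat (x1p k)) =
      vm - vp := by
    simp only [vm, vp, Finset.sum_sub_distrib]
    abel
  rw [hgrad.gradient, ← smul_sub, ← map_sub, hdata, Sim_eq]
  calc ‖(1 / (2 * (K : ℝ))) • A (vm - vp)‖
      = 1 / (2 * K) * ‖A (vm - vp)‖ := by rw [norm_smul, Real.norm_of_nonneg (by positivity)]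
    _ ≤ 1 / (2 * K) * (‖A‖ * (‖vp‖ + ‖vm‖)) := by
        gcongr
        exact (A.le_opNorm _).trans (by gcongr; rw [add_comm]; exact norm_sub_le _ _)
    _ = L * ‖A‖ * (1 / (2 * K * L) * (‖vp‖ + ‖vm‖)) := by
        field_simp
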